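/- Let Γ be a countable group acting continuously on a locally compact Hausdorff topological space X. Let Δ ≤ Γ be a subgroup and let x, y ∈ X be such that δx = x for all δ ∈ Δ, but δy ≠ y for some δ ∈ Δ. Assume there exists γ ∈ Γ such that the sequence γ^n x converges to y as n → ∞. Then γ is not a recurrent direction for Δ. -/
import Mathlib


/-- The conjugation action of `γ` on subgroups: `Δ ↦ γ Δ γ⁻¹`. -/
def conjSubgroup {Γ : Type*} [Group Γ] (γ : Γ) (Δ : Subgroup Γ) : Subgroup Γ :=
  Subgroup.map (MulAut.conj γ).toMonoidHom Δ

/-- The Chabauty topology on `Subgroup Γ`: induced from the product of discrete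
topologies on `Γ → Prop` via the membership indicator. -/
def chabautyTopology (Γ : Type*) [Group Γ] : TopologicalSpace (Subgroup Γ) :=
  TopologicalSpace.induced (fun (Δ : Subgroup Γ) (g : Γ) => g ∈ Δ)
    (@Pi.topologicalSpace Γ (fun _ => Prop) (fun _ => ⊥))

/-- `γ` is a recurrent direction for `Δ`: every Chabauty-open neighbourhood `O` of `Δ`
contains `γ^n Δ γ^{-n}` for some `n ≥ 1`. -/
def IsRecurrentDirection {Γ : Type*} [Group Γ] (γ : Γ) (Δ : Subgroup Γ) : Prop :=
  ∀ O : Set (Subgroup Γ), (chabautyTopology Γ).IsOpen O → Δ ∈ O →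
    ∃ n : ℕ, 1 ≤ n ∧ conjSubgroup (γ ^ n) Δ ∈ O

/-- `Δ` is a boomerang subgroup if every `γ` is a recurrent direction for it. -/
def IsBoomerang {Γ : Type*} [Group Γ] (Δ : Subgroup Γ) : Prop :=
  ∀ γ : Γ, IsRecurrentDirection γ Δ

lemma mem_conjSubgroup {Γ : Type*} [Group Γ] (γ g : Γ) (Δ : Subgroup Γ) :
    g ∈ conjSubgroup γ Δ ↔ γ⁻¹ * g * γ ∈ Δ := by
  constructor
  · rintro ⟨d, hd, rfl⟩
    simpa [MulAut.conj, mul_assoc] using hd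
  · intro h
    exact ⟨γ⁻¹ * g * γ, h, by simp [MulAut.conj, mul_assoc]⟩

lemma conjSubgroup_conjSubgroup {Γ : Type*} [Group Γ] (a b : Γ) (Δ : Subgroup Γ) :
    conjSubgroup a (conjSubgroup b Δ) = conjSubgroup (a * b) Δ := by
  ext g
  simp [mem_conjSubgroup, mul_assoc]

lemma continuous_conjSubgroup {Γ : Type*} [Group Γ] (γ : Γ) :
    @Continuous _ _ (chabautyTopology Γ) (chabautyTopology Γ) (conjSubgroup γ) := by
  letI : TopologicalSpace Prop := ⊥
  letI : TopologicalSpace (Subgroup Γ) := chabautyTopology Γ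
  have hι : Continuous (fun (Δ : Subgroup Γ) (g : Γ) => g ∈ Δ) := continuous_induced_dom
  apply continuous_induced_rng.mpr
  apply continuous_pi
  intro g
  have : (fun Δ : Subgroup Γ => g ∈ conjSubgroup γ Δ)
      = (fun f : Γ → Prop => f (γ⁻¹ * g * γ)) ∘ (fun (Δ : Subgroup Γ) (h : Γ) => h ∈ Δ) := by
    funext Δ
    simp [mem_conjSubgroup]
  have h2 : (fun a : Subgroup Γ => ((fun (Δ : Subgroup Γ) (g : Γ) => g ∈ Δ) ∘ conjSubgroup γ) a g)
      = fun Δ : Subgroup Γ => g ∈ conjSubgroup γ Δ := rfl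
  rw [h2, this]
  exact (continuous_apply (γ⁻¹ * g * γ)).comp hι

lemma recurrent_large {Γ : Type*} [Group Γ] {γ : Γ} {Δ : Subgroup Γ}
    (h : IsRecurrentDirection γ Δ) (O : Set (Subgroup Γ))
    (hO : (chabautyTopology Γ).IsOpen O) (hΔ : Δ ∈ O) (N : ℕ) :
    ∃ n : ℕ, N ≤ n ∧ 1 ≤ n ∧ conjSubgroup (γ ^ n) Δ ∈ O := by
  induction N with
  | zero =>
    obtain ⟨n, hn1, hn⟩ := h O hO hΔ
    exact ⟨n, Nat.zero_le n, hn1, hn⟩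
  | succ N ih =>
    obtain ⟨n, hnN, hn1, hn⟩ := ih
    have hopen : (chabautyTopology Γ).IsOpen (conjSubgroup (γ ^ n) ⁻¹' O) :=
      @Continuous.isOpen_preimage _ _ (chabautyTopology Γ) (chabautyTopology Γ) _
        (continuous_conjSubgroup (γ ^ n)) O hO
    obtain ⟨m, hm1, hm⟩ := h _ hopen (by simpa [Set.mem_preimage] using hn)
    refine ⟨n + m, by omega, by omega, ?_⟩
    have := hm
    simp only [Set.mem_preimage] at this
    rwa [conjSubgroup_conjSubgroup, ← pow_add] at this

theorem not_recurrent_of_orbit_escapes {Γ X : Type*} [Group Γ] [Countable Γ]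
    [TopologicalSpace X] [LocallyCompactSpace X] [T2Space X] [MulAction Γ X]
    (hcont : ∀ γ : Γ, Continuous fun x : X => γ • x)
    (Δ : Subgroup Γ) (x y : X)
    (hfix : ∀ δ ∈ Δ, δ • x = x) (hmove : ∃ δ ∈ Δ, δ • y ≠ y)
    (γ : Γ) (hconv : Filter.Tendsto (fun n : ℕ => γ ^ n • x) Filter.atTop (nhds y)) :
    ¬ IsRecurrentDirection γ Δ := by
  intro hrec
  obtain ⟨δ, hδΔ, hδy⟩ := hmove
  -- a neighbourhood of y on which δ moves every point
  obtain ⟨U, V, hU, hV, hyU, hδyV, hUV⟩ := t2_separation hδy.symm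
  set W : Set X := U ∩ (fun z : X => δ • z) ⁻¹' V with hW
  have hWopen : IsOpen W := hU.inter ((hcont δ).isOpen_preimage V hV)
  have hyW : y ∈ W := ⟨hyU, hδyV⟩
  have hmoveW : ∀ z ∈ W, δ • z ≠ z := by
    rintro z ⟨hz1, hz2⟩ heq
    exact Set.disjoint_left.mp hUV hz1 (heq ▸ Set.mem_preimage.mp hz2)
  -- eventually γ^n x ∈ W
  have hev : ∀ᶠ n : ℕ in Filter.atTop, γ ^ n • x ∈ W :=
    hconv (hWopen.mem_nhds hyW)
  obtain ⟨N, hN⟩ := Filter.eventually_atTop.mp hev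
  -- the open set {H | δ ∈ H}
  letI : TopologicalSpace Prop := ⊥
  haveI : DiscreteTopology Prop := ⟨rfl⟩
  set O : Set (Subgroup Γ) := {H | δ ∈ H} with hO
  have hOopen : (chabautyTopology Γ).IsOpen O := by
    refine isOpen_induced (s := {f : Γ → Prop | f δ}) ?_
    have heq : {f : Γ → Prop | f δ} = (fun f : Γ → Prop => f δ) ⁻¹' {p : Prop | p} := rfl
    rw [heq]
    exact (continuous_apply δ).isOpen_preimage _ (isOpen_discrete _)
  obtain ⟨n, hnN, hn1, hn⟩ := recurrent_large hrec O hOopen hδΔ N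
  have hmem : (γ ^ n)⁻¹ * δ * γ ^ n ∈ Δ := (mem_conjSubgroup _ _ _).mp hn
  have hfixn : δ • (γ ^ n • x) = γ ^ n • x := by
    have := hfix _ hmem
    calc δ • γ ^ n • x = γ ^ n • ((γ ^ n)⁻¹ * δ * γ ^ n) • x := by
          simp [mul_smul]
      _ = γ ^ n • x := by rw [this]
  exact hmoveW _ (hN n hnN) hfixn
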